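/- With J(I) the CA-ML instance constructed from a restricted SMTI instance I as described, in every coalition-stable matching M of J(I) the following holds: whenever a student is matched in M with a 1-credit course c_k (arising from a tied woman w_k), she is also matched in M with its twin 1-credit course c_k'. Consequently, in a coalition-stable matching every matched student is assigned either a single 2-credit course or the pair {c_k, c_k'} of 1-credit courses arising from the same woman. -/

import Mathlib

/-!
Induction along the master list of students. Suppose student `s` holds a 1-credit course `c`
without its twin `c'`, and pick such a `c` from the best-ranked woman. Apart from `c`, the
credit limit 2 lets `s` hold at most one further course, again a 1-credit course lacking its
twin and coming from a worse-ranked woman, hence ranked below `c'`. Exchanging it for `c'`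
keeps the credits, and `c'` is free or held by a worse student: a better student holds twins
by induction, so holding `c'` she would hold `c` too. Thus `{c'}` is a blocking coalition.
Once every student holds twins, the credit limit leaves only `{c_j}` with 2 credits or
`{c_k, c_k'}`.
-/
open Finset

/-- An instance of the Course Allocation problem: students `S`, courses `C`,
mutual acceptability `acc`, strict preferences of students over (acceptable) courses
and of courses over (acceptable) students, positive credits, upper quotas and credit limits. -/
structure CA (S C : Type*) where
  acc : S → C → Prop
  sPref : S → C → C → Prop
  cPref : C → S → S → Prop
  credits : C → ℚ
  quota : C → ℕ
  limit : S → ℚ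
  credits_pos : ∀ c, 0 < credits c
  sPref_irrefl : ∀ s c, ¬ sPref s c c
  sPref_trans : ∀ s c₁ c₂ c₃, sPref s c₁ c₂ → sPref s c₂ c₃ → sPref s c₁ c₃
  sPref_total : ∀ s c₁ c₂, acc s c₁ → acc s c₂ → c₁ ≠ c₂ → sPref s c₁ c₂ ∨ sPref s c₂ c₁
  cPref_irrefl : ∀ c s, ¬ cPref c s s
  cPref_trans : ∀ c s₁ s₂ s₃, cPref c s₁ s₂ → cPref c s₂ s₃ → cPref c s₁ s₃
  cPref_total : ∀ c s₁ s₂, acc s₁ c → acc s₂ c → s₁ ≠ s₂ → cPref c s₁ s₂ ∨ cPref c s₂ s₁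

section CourseAllocation

variable {S C : Type*} [DecidableEq S] [DecidableEq C]

/-- The set `C_M(s)` of courses assigned to student `s` in assignment `M`. -/
def CM (M : Finset (S × C)) (s : S) : Finset C :=
  (M.filter fun p => p.1 = s).image Prod.snd

/-- The set `S_M(c)` of students assigned to course `c` in assignment `M`. -/
def SM (M : Finset (S × C)) (c : C) : Finset S :=
  (M.filter fun p => p.2 = c).image Prod.fst

/-- The total number of credits `O(D)` of a set of courses `D`. -/
def CA.O (I : CA S C) (D : Finset C) : ℚ := ∑ c ∈ D, I.credits c

/-- `M` is a matching: all pairs acceptable, credit limits and upper quotas respected. -/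
def CA.IsMatching (I : CA S C) (M : Finset (S × C)) : Prop :=
  (∀ p ∈ M, I.acc p.1 p.2) ∧
  (∀ s, I.O (CM M s) ≤ I.limit s) ∧
  (∀ c, (SM M c).card ≤ I.quota c)

/-- Feasibility of a matching with respect to families `F` of feasible course sets. -/
def Feasible (F : S → Set (Finset C)) (M : Finset (S × C)) : Prop :=
  ∀ s, CM M s ∈ F s

/-- `F` is a family of downward-feasible constraints: every feasible set consists of
acceptable courses, and subsets of feasible sets are feasible. -/
def CA.DownwardFeasible (I : CA S C) (F : S → Set (Finset C)) : Prop :=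
  (∀ s, ∀ D ∈ F s, ∀ c ∈ D, I.acc s c) ∧
  (∀ s, ∀ D ∈ F s, ∀ D' ⊆ D, D' ∈ F s)

/-- Absent downward-feasible constraints (every set of courses feasible). -/
def noF : S → Set (Finset C) := fun _ => Set.univ

/-- Condition (1) of all blocking definitions: course `c` is undersubscribed in `M`
or prefers `s` to one of its assigned students. -/
def CA.Wants (I : CA S C) (M : Finset (S × C)) (s : S) (c : C) : Prop :=
  (SM M c).card < I.quota c ∨ ∃ s' ∈ SM M c, I.cPref c s s'

/-- `(s, c)` is a blocking pair of `M` (w.r.t. feasibility constraints `F`). -/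
def CA.BlockingPair (I : CA S C) (F : S → Set (Finset C)) (M : Finset (S × C))
    (s : S) (c : C) : Prop :=
  I.acc s c ∧ (s, c) ∉ M ∧ I.Wants M s c ∧
  ∃ D ⊆ CM M s, (∀ c' ∈ D, I.sPref s c c') ∧
    I.O (CM M s) - I.O D + I.credits c ≤ I.limit s ∧
    (CM M s \ D) ∪ {c} ∈ F s

def CA.PairStable (I : CA S C) (F : S → Set (Finset C)) (M : Finset (S × C)) : Prop :=
  ∀ s c, ¬ I.BlockingPair F M s c

/-- `(s, c)` is a size-blocking pair of `M`: like a blocking pair, but additionally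
the dropped set `D` must satisfy `O(D) ≤ O(c)`. -/
def CA.SizeBlockingPair (I : CA S C) (F : S → Set (Finset C)) (M : Finset (S × C))
    (s : S) (c : C) : Prop :=
  I.acc s c ∧ (s, c) ∉ M ∧ I.Wants M s c ∧
  ∃ D ⊆ CM M s, (∀ c' ∈ D, I.sPref s c c') ∧ I.O D ≤ I.credits c ∧
    I.O (CM M s) - I.O D + I.credits c ≤ I.limit s ∧
    (CM M s \ D) ∪ {c} ∈ F s

def CA.PairSizeStable (I : CA S C) (F : S → Set (Finset C)) (M : Finset (S × C)) : Prop :=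
  ∀ s c, ¬ I.SizeBlockingPair F M s c

/-- `(s, B)` is a blocking coalition of `M`. -/
def CA.BlockingCoalition (I : CA S C) (F : S → Set (Finset C)) (M : Finset (S × C))
    (s : S) (B : Finset C) : Prop :=
  B.Nonempty ∧ (∀ c ∈ B, I.acc s c ∧ (s, c) ∉ M) ∧ (∀ c ∈ B, I.Wants M s c) ∧
  ∃ D ⊆ CM M s, (∀ c ∈ B, ∀ c' ∈ D, I.sPref s c c') ∧ I.O D ≤ I.O B ∧
    I.O (CM M s) - I.O D + I.O B ≤ I.limit s ∧
    (CM M s \ D) ∪ B ∈ F s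

def CA.CoalitionStable (I : CA S C) (F : S → Set (Finset C)) (M : Finset (S × C)) : Prop :=
  ∀ s B, ¬ I.BlockingCoalition F M s B

/-- `(s, B)` is a first-blocking coalition of `M`: as a blocking coalition, except that
`s` need only prefer her most-preferred course of `B` to her most-preferred course of `D`
(equivalently, some course of `B` is preferred to every course of `D`; vacuous if `D = ∅`). -/
def CA.FirstBlockingCoalition (I : CA S C) (F : S → Set (Finset C)) (M : Finset (S × C))
    (s : S) (B : Finset C) : Prop :=
  B.Nonempty ∧ (∀ c ∈ B, I.acc s c ∧ (s, c) ∉ M) ∧ (∀ c ∈ B, I.Wants M s c) ∧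
  ∃ D ⊆ CM M s, (∃ b ∈ B, ∀ c' ∈ D, I.sPref s b c') ∧ I.O D ≤ I.O B ∧
    I.O (CM M s) - I.O D + I.O B ≤ I.limit s ∧
    (CM M s \ D) ∪ B ∈ F s

def CA.FirstCoalitionStable (I : CA S C) (F : S → Set (Finset C)) (M : Finset (S × C)) : Prop :=
  ∀ s B, ¬ I.FirstBlockingCoalition F M s B

/-- Every course exactly fills its upper quota. -/
def CA.CourseComplete (I : CA S C) (M : Finset (S × C)) : Prop :=
  ∀ c, (SM M c).card = I.quota c

/-- Every student takes as many credits as her credit limit. -/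
def CA.StudentComplete (I : CA S C) (M : Finset (S × C)) : Prop :=
  ∀ s, I.O (CM M s) = I.limit s

/-- The size of a matching: total number of credits taken by all students. -/
def CA.size [Fintype S] (I : CA S C) (M : Finset (S × C)) : ℚ :=
  ∑ s : S, I.O (CM M s)

/-- `ml` is a master list of students for the instance `I`: a strict total order on
students with which every course's preferences are consistent. -/
def CA.MasterList (I : CA S C) (ml : S → S → Prop) : Prop :=
  (∀ s, ¬ ml s s) ∧ (∀ s₁ s₂ s₃, ml s₁ s₂ → ml s₂ s₃ → ml s₁ s₃) ∧
  (∀ s₁ s₂, s₁ ≠ s₂ → ml s₁ s₂ ∨ ml s₂ s₁) ∧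
  (∀ c s s', I.acc s c → I.acc s' c → (I.cPref c s s' ↔ ml s s'))

end CourseAllocation
/-- Builds a `CA` instance from rank functions (smaller rank = more preferred), with a fixed
injective tie-breaking that never fires when ranks are distinct on acceptable pairs. -/
def CA.ofRanks {S C : Type*} (acc : S → C → Prop) (srank : S → C → ℕ) (crank : C → S → ℕ)
    (iS : S → ℕ) (iC : C → ℕ) (hiS : Function.Injective iS) (hiC : Function.Injective iC)
    (credits : C → ℚ) (quota : C → ℕ) (limit : S → ℚ) (hpos : ∀ c, 0 < credits c) :
    CA S C where
  acc := acc
  sPref s c c' := acc s c ∧ acc s c' ∧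
    (srank s c < srank s c' ∨ (srank s c = srank s c' ∧ iC c < iC c'))
  cPref c s s' := acc s c ∧ acc s' c ∧
    (crank c s < crank c s' ∨ (crank c s = crank c s' ∧ iS s < iS s'))
  credits := credits
  quota := quota
  limit := limit
  credits_pos := hpos
  sPref_irrefl := by rintro s c ⟨-, -, h⟩; omega
  sPref_trans := by rintro s c₁ c₂ c₃ ⟨h1, -, ha⟩ ⟨-, h2, hb⟩; exact ⟨h1, h2, by omega⟩
  sPref_total := by
    intro s c₁ c₂ h1 h2 hne
    have hi : iC c₁ ≠ iC c₂ := fun h => hne (hiC h)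
    rcases Nat.lt_trichotomy (srank s c₁) (srank s c₂) with h | h | h
    · exact Or.inl ⟨h1, h2, Or.inl h⟩
    · rcases Nat.lt_or_ge (iC c₁) (iC c₂) with h' | h'
      · exact Or.inl ⟨h1, h2, Or.inr ⟨h, h'⟩⟩
      · exact Or.inr ⟨h2, h1, Or.inr ⟨h.symm, by omega⟩⟩
    · exact Or.inr ⟨h2, h1, Or.inl h⟩
  cPref_irrefl := by rintro c s ⟨-, -, h⟩; omega
  cPref_trans := by rintro c s₁ s₂ s₃ ⟨h1, -, ha⟩ ⟨-, h2, hb⟩; exact ⟨h1, h2, by omega⟩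
  cPref_total := by
    intro c s₁ s₂ h1 h2 hne
    have hi : iS s₁ ≠ iS s₂ := fun h => hne (hiS h)
    rcases Nat.lt_trichotomy (crank c s₁) (crank c s₂) with h | h | h
    · exact Or.inl ⟨h1, h2, Or.inl h⟩
    · rcases Nat.lt_or_ge (iS s₁) (iS s₂) with h' | h'
      · exact Or.inl ⟨h1, h2, Or.inr ⟨h, h'⟩⟩
      · exact Or.inr ⟨h2, h1, Or.inr ⟨h.symm, by omega⟩⟩
    · exact Or.inr ⟨h2, h1, Or.inl h⟩
/-- A restricted SMTI instance: `n` men and `n` women (both indexed by `Fin n`), with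
mutual acceptability `acc m w`, a strict master list of men given by the injective
ranking `mrank`, and a master list of women with ties given by the ranking `wrank`,
where ties (classes of equal `wrank`) have length at most 2, encoded by the tie-partner
involution `twin` (`twin j = j` exactly when `w_j` is not in a tie).  Every agent's
preference list is the restriction of the other side's master list to her/his
acceptable set. -/
structure RSMTI (n : ℕ) where
  acc : Fin n → Fin n → Prop
  mrank : Fin n → Fin n
  mrank_inj : Function.Injective mrank
  wrank : Fin n → ℕ
  twin : Fin n → Fin n
  twin_invol : ∀ j, twin (twin j) = j
  wrank_eq_iff : ∀ j k, wrank j = wrank k ↔ (k = j ∨ k = twin j)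

/-- `σ` is a complete weakly stable matching of the restricted SMTI instance `I`:
it is a bijection between men and women along acceptable pairs, and no acceptable
pair `(m, w)` exists where both `m` and `w` strictly prefer each other to their
partners (men's preferences come from the women's master list `wrank`, women's
preferences from the men's master list `mrank`). -/
def RSMTI.CompleteWeaklyStable {n : ℕ} (I : RSMTI n) (σ : Equiv.Perm (Fin n)) : Prop :=
  (∀ m, I.acc m (σ m)) ∧
  ∀ m w, ¬ (I.acc m w ∧ σ m ≠ w ∧
    I.wrank w < I.wrank (σ m) ∧ I.mrank m < I.mrank (σ.symm w))

/-- Woman `w_j` is tied in the women's master list and is the designated member of her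
tie (the one whose course gets 1 credit, together with a twin 1-credit course). -/
def RSMTI.des {n : ℕ} (I : RSMTI n) (j : Fin n) : Prop :=
  I.twin j ≠ j ∧ j < I.twin j

instance {n : ℕ} (I : RSMTI n) (j : Fin n) : Decidable (I.des j) :=
  inferInstanceAs (Decidable (I.twin j ≠ j ∧ j < I.twin j))
/-- Acceptability in `J(I)`: student `m` finds course `c_j = Sum.inl j` acceptable iff
`m` finds `w_j` acceptable; the twin course `c_j' = Sum.inr j` exists (has the same
preference list as `c_j`) only when `w_j` is the designated member of a tie. -/
def RSMTI.Jacc {n : ℕ} (I : RSMTI n) (m : Fin n) : Fin n ⊕ Fin n → Prop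
  | .inl j => I.acc m j
  | .inr j => I.des j ∧ I.acc m j

/-- Credits in `J(I)`: a non-designated woman's course has 2 credits, a designated
woman's course `c_j` and its twin `c_j'` have 1 credit each. -/
def RSMTI.Jcredits {n : ℕ} (I : RSMTI n) : Fin n ⊕ Fin n → ℚ
  | .inl j => if I.des j then 1 else 2
  | .inr _ => 1

/-- Upper quotas in `J(I)`: every course has upper quota 1; the twin slot `Sum.inr j`
of a non-designated woman is a phantom course with quota 0 (acceptable to nobody). -/
def RSMTI.Jquota {n : ℕ} (I : RSMTI n) : Fin n ⊕ Fin n → ℕ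
  | .inl _ => 1
  | .inr j => if I.des j then 1 else 0

/-- The rank of a course in the master list of courses of `J(I)`: the women's master
list with each untied `w_j` replaced by `c_j` and each tie `{w_k, w_l}` (with `w_k`
designated) replaced by `c_k ≻ c_l ≻ c_k'`.  All students rank courses accordingly. -/
def RSMTI.Jrank {n : ℕ} (I : RSMTI n) : Fin n ⊕ Fin n → ℕ
  | .inl j => 3 * I.wrank j + (if I.des j then 0 else if I.twin j ≠ j then 1 else 0)
  | .inr j => 3 * I.wrank j + 2

/-- The CA-ML instance `J(I)` built from the restricted SMTI instance `I`: each man `m_i`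
becomes a student `s_i` with credit limit 2; each woman `w_j` becomes a course `c_j`
(plus a twin `c_j'` when `w_j` is a designated tied woman) as described; students rank
courses by the course master list `Jrank` and courses rank students by the men's
master list `mrank`. -/
def RSMTI.J {n : ℕ} (I : RSMTI n) : CA (Fin n) (Fin n ⊕ Fin n) :=
  CA.ofRanks (fun m c => I.Jacc m c)
    (fun _ c => I.Jrank c)
    (fun _ m => (I.mrank m : ℕ))
    Encodable.encode Encodable.encode Encodable.encode_injective Encodable.encode_injective
    I.Jcredits I.Jquota (fun _ => 2)
    (by
      rintro (j | j)
      · show (0 : ℚ) < (if I.des j then 1 else 2); split <;> norm_num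
      · show (0 : ℚ) < 1; norm_num)

lemma CA.card_le_O {S C : Type*} {I : CA S C} (h : ∀ c, 1 ≤ I.credits c) (D : Finset C) :
    (#D : ℚ) ≤ I.O D := by
  simpa [CA.O] using Finset.card_nsmul_le_sum D I.credits 1 fun c _ => h c

lemma CA.O_pair {S C : Type*} [DecidableEq C] {I : CA S C} {c b : C} (hne : c ≠ b) :
    I.O {c, b} = I.credits c + I.credits b :=
  Finset.sum_pair hne

section CourseAllocation

variable {S C : Type*} [DecidableEq S] [DecidableEq C]

@[simp]
lemma mem_CM {M : Finset (S × C)} {s : S} {c : C} : c ∈ CM M s ↔ (s, c) ∈ M := by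
  simp [CM]

@[simp]
lemma mem_SM {M : Finset (S × C)} {s : S} {c : C} : s ∈ SM M c ↔ (s, c) ∈ M := by
  simp [SM]

namespace CA

variable {I : CA S C} {F : S → Set (Finset C)} {M : Finset (S × C)}

lemma IsMatching.eq_of_mem_of_mem (hM : I.IsMatching M) {c : C} (hq : I.quota c ≤ 1)
    {s₁ s₂ : S} (h₁ : (s₁, c) ∈ M) (h₂ : (s₂, c) ∈ M) : s₁ = s₂ :=
  Finset.card_le_one.1 ((hM.2.2 c).trans hq) _ (mem_SM.2 h₁) _ (mem_SM.2 h₂)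

lemma wants_of_forall_cPref {s : S} {c : C} (hq : 0 < I.quota c)
    (h : ∀ s' ∈ SM M c, I.cPref c s s') : I.Wants M s c := by
  obtain he | ⟨s', hs'⟩ := (SM M c).eq_empty_or_nonempty
  · exact Or.inl (by simpa [he] using hq)
  · exact Or.inr ⟨s', hs', h s' hs'⟩

lemma SizeBlockingPair.blockingCoalition_singleton {s : S} {c : C}
    (h : I.SizeBlockingPair F M s c) : I.BlockingCoalition F M s {c} := by
  obtain ⟨hacc, hnot, hwants, D, hD, hpref, hO, hlim, hF⟩ := h
  refine ⟨singleton_nonempty c, by simpa using ⟨hacc, hnot⟩, by simpa, D, hD, by simpa,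
    ?_, ?_, hF⟩ <;> simpa [CA.O]

lemma CoalitionStable.pairSizeStable (h : I.CoalitionStable F M) : I.PairSizeStable F M :=
  fun s c hb => h s {c} hb.blockingCoalition_singleton

end CA

end CourseAllocation

lemma Sum.eq_or_eq_swap_of_elim_id_eq {α : Type*} {a b : α ⊕ α}
    (h : a.elim id id = b.elim id id) : b = a ∨ b = a.swap := by
  rcases a with a | a <;> rcases b with b | b <;> simp_all

/-- The woman `w_j` from which the course `c_j = inl j`, or its twin `c_j' = inr j`, arises. -/
def RSMTI.woman {n : ℕ} (c : Fin n ⊕ Fin n) : Fin n := c.elim id id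

namespace RSMTI

variable {n : ℕ} (I : RSMTI n)

lemma wrank_ne_of_des {j k : Fin n} (hj : I.des j) (hk : I.des k) (hne : j ≠ k) :
    I.wrank j ≠ I.wrank k := by
  intro h
  rcases (I.wrank_eq_iff j k).1 h with rfl | rfl
  · exact hne rfl
  · have := I.twin_invol j ▸ hk.2
    exact lt_asymm hj.2 this

lemma J_credits_eq_one_or_two (c : Fin n ⊕ Fin n) : I.J.credits c = 1 ∨ I.J.credits c = 2 := by
  rcases c with j | j
  · show (if I.des j then 1 else 2 : ℚ) = 1 ∨ (if I.des j then 1 else 2 : ℚ) = 2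
    split_ifs <;> norm_num
  · exact Or.inl rfl

lemma one_le_J_credits (c : Fin n ⊕ Fin n) : 1 ≤ I.J.credits c := by
  rcases I.J_credits_eq_one_or_two c with h | h <;> norm_num [h]

lemma J_quota_le_one (c : Fin n ⊕ Fin n) : I.J.quota c ≤ 1 := by
  rcases c with j | j
  · exact le_rfl
  · show (if I.des j then 1 else 0) ≤ 1
    split_ifs <;> norm_num

variable {I}

lemma des_woman_of_J_credits_eq_one {s : Fin n} {c : Fin n ⊕ Fin n} (hacc : I.J.acc s c)
    (h : I.J.credits c = 1) : I.des (woman c) := by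
  rcases c with j | j
  · by_contra hj
    have : (if I.des j then 1 else 2 : ℚ) = 1 := h
    rw [if_neg (show ¬I.des j from hj)] at this
    norm_num at this
  · exact hacc.1

lemma J_credits_of_des {c : Fin n ⊕ Fin n} (h : I.des (woman c)) : I.J.credits c = 1 := by
  rcases c with j | j
  · exact if_pos h
  · rfl

lemma J_quota_of_des {c : Fin n ⊕ Fin n} (h : I.des (woman c)) : I.J.quota c = 1 := by
  rcases c with j | j
  · rfl
  · exact if_pos h

lemma J_acc_swap {s : Fin n} {c : Fin n ⊕ Fin n} (h : I.des (woman c)) (hacc : I.J.acc s c) :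
    I.J.acc s c.swap := by
  rcases c with j | j
  · exact ⟨h, hacc⟩
  · exact hacc.2

lemma Jrank_mem_Icc (c : Fin n ⊕ Fin n) :
    3 * I.wrank (woman c) ≤ I.Jrank c ∧ I.Jrank c ≤ 3 * I.wrank (woman c) + 2 := by
  rcases c with j | j <;> simp only [woman, Sum.elim_inl, Sum.elim_inr, id, Jrank]
  · split_ifs <;> omega
  · omega

lemma J_sPref_of_wrank_lt {s : Fin n} {c c' : Fin n ⊕ Fin n} (hc : I.J.acc s c)
    (hc' : I.J.acc s c') (h : I.wrank (woman c) < I.wrank (woman c')) : I.J.sPref s c c' :=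
  ⟨hc, hc', Or.inl (show I.Jrank c < I.Jrank c' by
    have := Jrank_mem_Icc (I := I) c
    have := Jrank_mem_Icc (I := I) c'
    omega)⟩

lemma J_cPref_of_mrank_lt {c : Fin n ⊕ Fin n} {s s' : Fin n} (hs : I.J.acc s c)
    (hs' : I.J.acc s' c) (h : I.mrank s < I.mrank s') : I.J.cPref c s s' :=
  ⟨hs, hs', Or.inl h⟩

variable {M : Finset (Fin n × (Fin n ⊕ Fin n))}

lemma woman_swap (c : Fin n ⊕ Fin n) : woman c.swap = woman c := by
  rcases c with j | j <;> rfl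

def HoldsTwins (I : RSMTI n) (M : Finset (Fin n × (Fin n ⊕ Fin n))) (s : Fin n) : Prop :=
  ∀ c ∈ CM M s, I.J.credits c = 1 → c.swap ∈ CM M s

lemma O_CM_le_two (hM : I.J.IsMatching M) (s : Fin n) : I.J.O (CM M s) ≤ 2 :=
  hM.2.1 s

lemma card_CM_le_two (hM : I.J.IsMatching M) (s : Fin n) : #(CM M s) ≤ 2 := by
  exact_mod_cast (CA.card_le_O I.one_le_J_credits _).trans (O_CM_le_two hM s)

lemma CM_eq_pair (hM : I.J.IsMatching M) {s : Fin n} {c b : Fin n ⊕ Fin n}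
    (hc : c ∈ CM M s) (hb : b ∈ CM M s) (hne : c ≠ b) : CM M s = {c, b} :=
  (eq_of_subset_of_card_le (insert_subset hc (singleton_subset_iff.2 hb))
    (by rw [card_pair hne]; exact card_CM_le_two hM s)).symm

lemma J_credits_eq_one_and_swap_not_mem_CM (hM : I.J.IsMatching M) {s : Fin n}
    {c b : Fin n ⊕ Fin n} (hc : c ∈ CM M s) (hcred : I.J.credits c = 1)
    (ht : c.swap ∉ CM M s) (hb : b ∈ CM M s) (hbc : b ≠ c) :
    I.J.credits b = 1 ∧ b.swap ∉ CM M s := by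
  have hpair := CM_eq_pair hM hc hb hbc.symm
  refine ⟨?_, ?_⟩
  · have hO := O_CM_le_two hM s
    rw [hpair, CA.O_pair hbc.symm, hcred] at hO
    linarith [I.one_le_J_credits b]
  · rw [hpair, mem_insert, mem_singleton, not_or]
    refine ⟨fun h => ht (by rwa [← h, Sum.swap_swap]), ?_⟩
    rcases b with j | j <;> simp

/-- The witness `c` is taken from the best-ranked woman. -/
lemma exists_lacking_twin_preferred (hM : I.J.IsMatching M) {s : Fin n}
    (hs : ¬I.HoldsTwins M s) :
    ∃ c ∈ CM M s, I.J.credits c = 1 ∧ c.swap ∉ CM M s ∧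
      ∀ b ∈ (CM M s).erase c, I.J.sPref s c.swap b := by
  classical
  set L := (CM M s).filter fun c => I.J.credits c = 1 ∧ c.swap ∉ CM M s
  have hL : L.Nonempty := by
    simp only [HoldsTwins, not_forall] at hs
    obtain ⟨c, hc, hcred, ht⟩ := hs
    exact ⟨c, mem_filter.2 ⟨hc, hcred, ht⟩⟩
  obtain ⟨c, hcL, hmin⟩ := L.exists_min_image (fun c => I.wrank (woman c)) hL
  obtain ⟨hc, hcred, ht⟩ := mem_filter.1 hcL
  refine ⟨c, hc, hcred, ht, fun b hb => ?_⟩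
  obtain ⟨hbc, hb⟩ := mem_erase.1 hb
  obtain ⟨hbcred, hbt⟩ := J_credits_eq_one_and_swap_not_mem_CM hM hc hcred ht hb hbc
  have hcacc := hM.1 _ (mem_CM.1 hc)
  have hbacc := hM.1 _ (mem_CM.1 hb)
  have hdc := des_woman_of_J_credits_eq_one hcacc hcred
  have hwne : woman c ≠ woman b := fun h => by
    rcases Sum.eq_or_eq_swap_of_elim_id_eq h with rfl | rfl
    exacts [hbc rfl, ht hb]
  have hlt : I.wrank (woman c) < I.wrank (woman b) :=
    (hmin b (mem_filter.2 ⟨hb, hbcred, hbt⟩)).lt_of_ne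
      (wrank_ne_of_des I hdc (des_woman_of_J_credits_eq_one hbacc hbcred) hwne)
  exact J_sPref_of_wrank_lt (J_acc_swap hdc hcacc) hbacc ((woman_swap c).symm ▸ hlt)

/-- The twin of `c` wants `s`: a better-ranked holder of it would, holding twins, hold `c`
as well, which `s` holds. -/
lemma wants_swap (hM : I.J.IsMatching M) {s : Fin n} {c : Fin n ⊕ Fin n}
    (hc : c ∈ CM M s) (hcred : I.J.credits c = 1) (ht : c.swap ∉ CM M s)
    (hbetter : ∀ s', I.mrank s' < I.mrank s → I.HoldsTwins M s') :
    I.J.Wants M s c.swap := by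
  have hcacc := hM.1 _ (mem_CM.1 hc)
  have hdc := des_woman_of_J_credits_eq_one hcacc hcred
  have hdt : I.des (woman c.swap) := (woman_swap c).symm ▸ hdc
  refine CA.wants_of_forall_cPref (by rw [J_quota_of_des hdt]; exact one_pos) fun s' hs' => ?_
  have hs'M := mem_SM.1 hs'
  rcases lt_trichotomy (I.mrank s) (I.mrank s') with hlt | heq | hgt
  · exact J_cPref_of_mrank_lt (J_acc_swap hdc hcacc) (hM.1 _ hs'M) hlt
  · exact absurd (mem_CM.2 hs'M) (I.mrank_inj heq ▸ ht)
  · have hc' := hbetter s' hgt c.swap (mem_CM.2 hs'M) (J_credits_of_des hdt)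
    rw [Sum.swap_swap, mem_CM] at hc'
    have hss' := hM.eq_of_mem_of_mem (I.J_quota_le_one c) hc' (mem_CM.1 hc)
    exact (lt_irrefl _ (hss' ▸ hgt)).elim

lemma sizeBlockingPair_swap (hM : I.J.IsMatching M) {s : Fin n} {c : Fin n ⊕ Fin n}
    (hc : c ∈ CM M s) (hcred : I.J.credits c = 1) (ht : c.swap ∉ CM M s)
    (hwants : I.J.Wants M s c.swap)
    (hpref : ∀ b ∈ (CM M s).erase c, I.J.sPref s c.swap b) :
    I.J.SizeBlockingPair noF M s c.swap := by
  have hcacc := hM.1 _ (mem_CM.1 hc)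
  have htcred : I.J.credits c.swap = 1 :=
    J_credits_of_des ((woman_swap c).symm ▸ des_woman_of_J_credits_eq_one hcacc hcred)
  have hO : I.J.O ((CM M s).erase c) + 1 = I.J.O (CM M s) := by
    rw [← hcred]; exact sum_erase_add _ _ hc
  have hlim := O_CM_le_two hM s
  refine ⟨J_acc_swap (des_woman_of_J_credits_eq_one hcacc hcred) hcacc, mt mem_CM.2 ht,
    hwants, _, erase_subset c _, hpref, ?_, ?_, Set.mem_univ _⟩
  · rw [htcred]; linarith
  · show _ ≤ (2 : ℚ)
    rw [htcred]; linarith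

theorem holdsTwins_of_coalitionStable (hM : I.J.IsMatching M)
    (hstab : I.J.CoalitionStable noF M) (s : Fin n) : I.HoldsTwins M s := by
  induction s using (InvImage.wf I.mrank wellFounded_lt).induction with
  | _ s hbetter =>
  by_contra hs
  obtain ⟨c, hc, hcred, ht, hpref⟩ := exists_lacking_twin_preferred hM hs
  exact hstab.pairSizeStable s c.swap <| sizeBlockingPair_swap hM hc hcred ht
    (wants_swap hM hc hcred ht hbetter) hpref

lemma CM_eq_of_holdsTwins (hM : I.J.IsMatching M) {s : Fin n} (hs : I.HoldsTwins M s)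
    (hne : (CM M s).Nonempty) :
    (∃ j, I.J.credits (Sum.inl j) = 2 ∧ CM M s = {Sum.inl j}) ∨
      (∃ k, I.des k ∧ CM M s = {Sum.inl k, Sum.inr k}) := by
  obtain ⟨c, hc⟩ := hne
  rcases I.J_credits_eq_one_or_two c with hcred | hcred
  · have hd := des_woman_of_J_credits_eq_one (hM.1 _ (mem_CM.1 hc)) hcred
    have hpair := CM_eq_pair hM hc (hs c hc hcred) (by rcases c with j | j <;> simp)
    rcases c with k | k
    · exact Or.inr ⟨k, hd, hpair⟩
    · exact Or.inr ⟨k, hd, hpair.trans (pair_comm _ _)⟩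
  · have hsingle : CM M s = {c} := by
      refine eq_singleton_iff_unique_mem.2 ⟨hc, fun b hb => by_contra fun hbc => ?_⟩
      have hO := O_CM_le_two hM s
      rw [CM_eq_pair hM hc hb (Ne.symm hbc), CA.O_pair (Ne.symm hbc), hcred] at hO
      linarith [I.one_le_J_credits b]
    rcases c with j | j
    · exact Or.inl ⟨j, hcred, hsingle⟩
    · norm_num [show I.J.credits (Sum.inr j) = 1 from rfl] at hcred

end RSMTI

/-- In every coalition-stable matching `M` of `J(I)`: whenever a
student is matched with a 1-credit course `c_k` (arising from a tied woman `w_k`, i.e.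
`k` designated), she is also matched with its twin course `c_k'`.  Consequently every
matched student is assigned either a single 2-credit course or the pair `{c_k, c_k'}`
of 1-credit courses arising from the same woman. -/
theorem JofRSMTI_coalitionStable_structure
    {n : ℕ} (I : RSMTI n) (M : Finset (Fin n × (Fin n ⊕ Fin n)))
    (hM : I.J.IsMatching M) (hstab : I.J.CoalitionStable noF M) :
    (∀ s k, I.des k → (s, Sum.inl k) ∈ M → (s, Sum.inr k) ∈ M) ∧
    (∀ s, (CM M s).Nonempty →
      (∃ j, I.J.credits (Sum.inl j) = 2 ∧ CM M s = {Sum.inl j}) ∨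
      (∃ k, I.des k ∧ CM M s = {Sum.inl k, Sum.inr k})) := by
  have htwins := RSMTI.holdsTwins_of_coalitionStable hM hstab
  refine ⟨fun s k hk hmem => ?_, fun s => RSMTI.CM_eq_of_holdsTwins hM (htwins s)⟩
  simpa using htwins s (Sum.inl k) (mem_CM.2 hmem) (RSMTI.J_credits_of_des hk)
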